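/- arXiv:2410.10924 — 2 statements merged into one kernel-verified Lean document; each statement's English description precedes it below -/
import Mathlib

section
/- For any joint distribution p(x,y) with marginals p(x), p(y), any measurable critic function f(x,y), and any positive function a(y), the quantity 1 + E_{p(x,y)}[log(e^{f(x,y)}/a(y))] - E_{p(x)p(y)}[e^{f(x,y)}/a(y)] is a lower bound on the mutual information I(X;Y). -/
open Finset

noncomputable def H2 (b : ℝ) : ℝ := -b * Real.logb 2 b - (1 - b) * Real.logb 2 (1 - b)

noncomputable def entropy {α : Type*} [Fintype α] (p : α → ℝ) : ℝ :=
  -∑ x, p x * Real.logb 2 (p x)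

noncomputable def mutualInfo {α β : Type*} [Fintype α] [Fintype β] (p : α × β → ℝ) : ℝ :=
  ∑ z : α × β, p z * Real.logb 2 (p z / ((∑ y, p (z.1, y)) * (∑ x, p (x, z.2))))

noncomputable def mutualInfoNat {α β : Type*} [Fintype α] [Fintype β] (p : α × β → ℝ) : ℝ :=
  ∑ z : α × β, p z * Real.log (p z / ((∑ y, p (z.1, y)) * (∑ x, p (x, z.2))))

def IsPmf {α : Type*} [Fintype α] (p : α → ℝ) : Prop := (∀ x, 0 ≤ p x) ∧ ∑ x, p x = 1

/-! The pointwise inequality `log u ≤ u - 1` at the ratio `u = q g / p`, where `q` is the product of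
the marginals and `g = e^f / a`, gives `p log g ≤ p log (p / q) + q g - p` for every outcome.
Summing, the first terms on the right add up to the mutual information and the last ones to `1`. -/

open Real

theorem mul_log_div_le_sub {p c : ℝ} (hp : 0 < p) (hc : 0 < c) : p * log (c / p) ≤ c - p :=
  calc p * log (c / p) ≤ p * (c / p - 1) :=
        mul_le_mul_of_nonneg_left (log_le_sub_one_of_pos (div_pos hc hp)) hp.le
    _ = c - p := by field_simp

theorem mul_log_le_mul_log_div_add_sub {p q g : ℝ} (hp : 0 ≤ p) (hq : 0 ≤ q)
    (hpq : 0 < p → 0 < q) (hg : 0 < g) : p * log g ≤ p * log (p / q) + q * g - p := by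
  rcases hp.eq_or_lt with rfl | hp
  · simpa using mul_nonneg hq hg.le
  have hq := hpq hp
  have hsplit : log g = log (p / q) + log (q * g / p) := by
    rw [← log_mul (by positivity) (by positivity)]
    congr 1
    field_simp
  rw [hsplit, mul_add]
  linarith [mul_log_div_le_sub hp (mul_pos hq hg)]

theorem sum_mul_log_le {ι : Type*} (s : Finset ι) (p q g : ι → ℝ) (hp : ∀ i ∈ s, 0 ≤ p i)
    (hq : ∀ i ∈ s, 0 ≤ q i) (hpq : ∀ i ∈ s, 0 < p i → 0 < q i) (hg : ∀ i ∈ s, 0 < g i) :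
    ∑ i ∈ s, p i * log (g i) ≤
      ∑ i ∈ s, p i * log (p i / q i) + ∑ i ∈ s, q i * g i - ∑ i ∈ s, p i := by
  rw [← sum_add_distrib, ← sum_sub_distrib]
  exact sum_le_sum fun i hi =>
    mul_log_le_mul_log_div_add_sub (hp i hi) (hq i hi) (hpq i hi) (hg i hi)

section Marginals

variable {α β : Type*} [Fintype α] [Fintype β] {p : α × β → ℝ}

theorem marginals_mul_nonneg (hp : ∀ z, 0 ≤ p z) (z : α × β) :
    0 ≤ (∑ y, p (z.1, y)) * (∑ x, p (x, z.2)) :=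
  mul_nonneg (sum_nonneg fun _ _ => hp _) (sum_nonneg fun _ _ => hp _)

theorem marginals_mul_pos (hp : ∀ z, 0 ≤ p z) {z : α × β} (hz : 0 < p z) :
    0 < (∑ y, p (z.1, y)) * (∑ x, p (x, z.2)) :=
  mul_pos (hz.trans_le (single_le_sum (f := fun y => p (z.1, y)) (fun _ _ => hp _) (mem_univ z.2)))
    (hz.trans_le (single_le_sum (f := fun x => p (x, z.2)) (fun _ _ => hp _) (mem_univ z.1)))

end Marginals

/-- General variational lower bound with positive function a(y):
1 + E_p[log(e^f / a)] - E_{pX·pY}[e^f / a] ≤ I(X;Y) (in nats). -/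
theorem variational_lower_bound {α β : Type*} [Fintype α] [Fintype β]
    (p : α × β → ℝ) (hp : IsPmf p) (f : α × β → ℝ) (a : β → ℝ) (ha : ∀ y, 0 < a y) :
    1 + (∑ z : α × β, p z * Real.log (Real.exp (f z) / a z.2))
      - ∑ z : α × β, (∑ y, p (z.1, y)) * (∑ x, p (x, z.2)) * (Real.exp (f z) / a z.2)
      ≤ mutualInfoNat p := by
  obtain ⟨hp0, hp1⟩ := hp
  have hsum := sum_mul_log_le univ p (fun z => (∑ y, p (z.1, y)) * (∑ x, p (x, z.2)))
    (fun z => exp (f z) / a z.2) (fun z _ => hp0 z) (fun z _ => marginals_mul_nonneg hp0 z)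
    (fun _ _ => marginals_mul_pos hp0) (fun z _ => div_pos (exp_pos _) (ha _))
  rw [hp1] at hsum
  unfold mutualInfoNat
  linarith
end

section
/- (NWJ bound) For any measurable function f with E_{p(x)p(y)}[e^{f(x,y)}] < ∞, I(X;Y) ≥ E_{p(x,y)}[f(x,y)] - e^{-1}·E_{p(x)p(y)}[e^{f(x,y)}]. -/
open Finset

/-!
Pointwise, `a t - b e^{t-1} ≤ a log (a / b)` for `a, b ≥ 0` with `b > 0` wherever `a > 0`: this
is `e^x ≥ 1 + x` at `x = t - 1 - log (a / b)`, i.e. Fenchel–Young for `u log u`. Summing it with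
`a = p z` and `b = p_X(z.1) p_Y(z.2)` gives the bound, since `p z ≤` each of its marginals.
-/

open Real

lemma mul_sub_exp_le_mul_log_div {a b : ℝ} (t : ℝ) (ha : 0 ≤ a) (hab : 0 < a → 0 < b)
    (hb : 0 ≤ b) : a * t - exp (-1) * (b * exp t) ≤ a * log (a / b) := by
  rcases ha.eq_or_lt with rfl | ha
  · simp only [zero_mul, zero_sub, zero_div, log_zero, mul_zero, neg_nonpos]
    positivity
  · have hb := hab ha
    have key : t - log (a / b) ≤ exp (-1) * (b * exp t) / a :=
      calc t - log (a / b) ≤ exp (t - log (a / b) - 1) := by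
            linarith [add_one_le_exp (t - log (a / b) - 1)]
        _ = exp (-1) * (b * exp t) / a := by
            rw [exp_sub, exp_sub, exp_log (by positivity), exp_neg]
            field_simp
    rw [le_div_iff₀ ha] at key
    linarith

theorem sum_mul_sub_exp_le_sum_mul_log_div {ι : Type*} (s : Finset ι) {q r : ι → ℝ}
    (f : ι → ℝ) (hq : ∀ i ∈ s, 0 ≤ q i) (hqr : ∀ i ∈ s, 0 < q i → 0 < r i)
    (hr : ∀ i ∈ s, 0 ≤ r i) :
    ∑ i ∈ s, q i * f i - exp (-1) * ∑ i ∈ s, r i * exp (f i) ≤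
      ∑ i ∈ s, q i * log (q i / r i) := by
  rw [mul_sum, ← sum_sub_distrib]
  exact sum_le_sum fun i hi =>
    mul_sub_exp_le_mul_log_div (f i) (hq i hi) (hqr i hi) (hr i hi)

lemma mul_self_le_sum_mul_sum {α β : Type*} [Fintype α] [Fintype β] {p : α × β → ℝ}
    (hp : ∀ z, 0 ≤ p z) (z : α × β) :
    p z * p z ≤ (∑ y, p (z.1, y)) * ∑ x, p (x, z.2) :=
  mul_le_mul (single_le_sum (f := fun y => p (z.1, y)) (fun _ _ => hp _) (mem_univ z.2))
    (single_le_sum (f := fun x => p (x, z.2)) (fun _ _ => hp _) (mem_univ z.1)) (hp z)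
    (sum_nonneg fun _ _ => hp _)

/-- NWJ bound: E_p[f] - e⁻¹ E_{pX·pY}[e^f] ≤ I(X;Y) (in nats). -/
theorem nwj_bound {α β : Type*} [Fintype α] [Fintype β]
    (p : α × β → ℝ) (hp : IsPmf p) (f : α × β → ℝ) :
    (∑ z : α × β, p z * f z)
      - Real.exp (-1) * ∑ z : α × β, (∑ y, p (z.1, y)) * (∑ x, p (x, z.2)) * Real.exp (f z)
      ≤ mutualInfoNat p := by
  have hmarg : ∀ z, p z * p z ≤ (∑ y, p (z.1, y)) * ∑ x, p (x, z.2) :=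
    mul_self_le_sum_mul_sum hp.1
  exact sum_mul_sub_exp_le_sum_mul_log_div univ f (fun z _ => hp.1 z)
    (fun z _ hz => (mul_pos hz hz).trans_le (hmarg z))
    (fun z _ => (mul_self_nonneg _).trans (hmarg z))
end
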